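/- For every x ∈ ℝ^n (n ≥ 1) and every perturbation e ∈ ℝ^n, the normwise relative change in the softmax function satisfies ‖g(x + e) − g(x)‖_∞ / ‖g(x)‖_∞ ≤ n ‖e‖_∞; in particular the ∞-norm relative condition number of softmax at x is at most n ‖x‖_∞. -/

import Mathlib

/-!
Along the segment `t ↦ x + t • e`, the derivative of the `j`-th softmax component is
`p j * (e j - ∑ i, p i * e i)` with `p = softmax (x + t • e)`. As `p` is a probability vector,
`e j - ∑ i, p i * e i = ∑ i ≠ j, p i * (e j - e i)` is at most `2 ‖e‖ (1 - p j)` in size, and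
`p j (1 - p j) ≤ 1/4` makes softmax `1/2`-Lipschitz in the sup norm. For the relative bound,
`∑ j, g j = 1` forces `1 ≤ n ‖g‖`.
-/

open Finset Real

noncomputable def softmax {ι : Type*} [Fintype ι] (x : ι → ℝ) : ι → ℝ :=
  fun j => exp (x j) / ∑ i, exp (x i)

section

variable {ι : Type*} [Fintype ι]

lemma one_le_card_mul_norm_of_sum_eq_one {p : ι → ℝ} (hp : ∑ i, p i = 1) :
    1 ≤ Fintype.card ι * ‖p‖ :=
  calc 1 = ∑ i, p i := hp.symm
    _ ≤ ∑ _i : ι, ‖p‖ := sum_le_sum fun i _ => (le_abs_self _).trans (norm_le_pi_norm p i)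
    _ = Fintype.card ι * ‖p‖ := by rw [sum_const, card_univ, nsmul_eq_mul]

lemma abs_sub_weighted_mean_le {p : ι → ℝ} (hp : ∀ i, 0 ≤ p i) (hsum : ∑ i, p i = 1)
    (e : ι → ℝ) (j : ι) : |e j - ∑ i, p i * e i| ≤ 2 * ‖e‖ * (1 - p j) := by
  classical
  have hmean : e j - ∑ i, p i * e i = ∑ i ∈ univ.erase j, p i * (e j - e i) := by
    rw [sum_erase _ (by simp)]
    simp only [mul_sub, sum_sub_distrib, ← sum_mul, hsum, one_mul]
  have hdist : ∀ i, |e j - e i| ≤ 2 * ‖e‖ := fun i =>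
    (norm_eq_abs _).symm.trans_le <| (norm_sub_le _ _).trans <| by
      linarith [norm_le_pi_norm e i, norm_le_pi_norm e j]
  rw [hmean]
  calc _ ≤ ∑ i ∈ univ.erase j, p i * (2 * ‖e‖) := by
        refine (abs_sum_le_sum_abs _ _).trans (sum_le_sum fun i _ => ?_)
        rw [abs_mul, abs_of_nonneg (hp i)]
        exact mul_le_mul_of_nonneg_left (hdist i) (hp i)
    _ = 2 * ‖e‖ * (1 - p j) := by
        rw [← sum_mul, sum_erase_eq_sub (mem_univ j), hsum, mul_comm]

lemma abs_mul_sub_weighted_mean_le {p : ι → ℝ} (hp : ∀ i, 0 ≤ p i) (hsum : ∑ i, p i = 1)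
    (e : ι → ℝ) (j : ι) : |p j * (e j - ∑ i, p i * e i)| ≤ ‖e‖ / 2 := by
  rw [abs_mul, abs_of_nonneg (hp j)]
  calc p j * |e j - ∑ i, p i * e i| ≤ p j * (2 * ‖e‖ * (1 - p j)) :=
        mul_le_mul_of_nonneg_left (abs_sub_weighted_mean_le hp hsum e j) (hp j)
    _ ≤ ‖e‖ / 2 := by nlinarith [sq_nonneg (2 * p j - 1), norm_nonneg e]

lemma sum_exp_pos [Nonempty ι] (x : ι → ℝ) : 0 < ∑ i, exp (x i) :=
  sum_pos (fun _ _ => exp_pos _) univ_nonempty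

lemma softmax_nonneg (x : ι → ℝ) (j : ι) : 0 ≤ softmax x j :=
  div_nonneg (exp_pos _).le (sum_nonneg fun _ _ => (exp_pos _).le)

lemma sum_softmax [Nonempty ι] (x : ι → ℝ) : ∑ j, softmax x j = 1 := by
  simp only [softmax]
  rw [← sum_div, div_self (sum_exp_pos x).ne']

lemma hasDerivAt_softmax_line (x e : ι → ℝ) (s : ℝ) :
    HasDerivAt (fun t : ℝ => softmax (x + t • e))
      (fun j => softmax (x + s • e) j * (e j - ∑ i, softmax (x + s • e) i * e i)) s := by
  refine hasDerivAt_pi.2 fun j => ?_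
  have : Nonempty ι := ⟨j⟩
  have hexp : ∀ i, HasDerivAt (fun t : ℝ => exp (x i + t * e i)) (exp (x i + s * e i) * e i) s :=
    fun i => by simpa using ((hasDerivAt_mul_const (e i)).const_add (x i)).exp
  have hD := HasDerivAt.fun_sum fun i (_ : i ∈ univ) => hexp i
  refine ((hexp j).div hD (sum_exp_pos _).ne').congr_deriv ?_
  simp only [softmax, Pi.add_apply, Pi.smul_apply, smul_eq_mul, div_mul_eq_mul_div, ← sum_div]
  field_simp

lemma norm_softmax_add_sub_le (x e : ι → ℝ) : ‖softmax (x + e) - softmax x‖ ≤ ‖e‖ / 2 := by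
  simpa using norm_image_sub_le_of_norm_deriv_le_segment_01'
    (fun s _ => (hasDerivAt_softmax_line x e s).hasDerivWithinAt) fun s _ =>
      (pi_norm_le_iff_of_nonneg (by positivity)).2 fun j =>
        have : Nonempty ι := ⟨j⟩
        abs_mul_sub_weighted_mean_le (softmax_nonneg _) (sum_softmax _) e j

end

/-- Normwise relative sensitivity of softmax: with
`g x = fun j => exp (x j) / ∑ i, exp (x i)` on `Fin n → ℝ` (`n ≥ 1`),
`‖g (x + e) - g x‖_∞ / ‖g x‖_∞ ≤ n ‖e‖_∞` for every perturbation `e`; in particular, for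
every `ε > 0` and every `e` with `‖e‖_∞ ≤ ε ‖x‖_∞`, the relative change per unit `ε` is at
most `n ‖x‖_∞`, so the ∞-norm relative condition number of softmax at `x` is at most
`n ‖x‖_∞`. (The norm on `Fin n → ℝ` is the sup norm.) -/
theorem softmax_relative_condition_bound (n : ℕ) (hn : 1 ≤ n) (x : Fin n → ℝ) :
    (∀ e : Fin n → ℝ,
      ‖(fun j => Real.exp (x j + e j) / ∑ i, Real.exp (x i + e i))
          - (fun j => Real.exp (x j) / ∑ i, Real.exp (x i))‖
        / ‖fun j => Real.exp (x j) / ∑ i, Real.exp (x i)‖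
        ≤ n * ‖e‖) ∧
    ∀ ε : ℝ, 0 < ε → ∀ e : Fin n → ℝ, ‖e‖ ≤ ε * ‖x‖ →
      ‖(fun j => Real.exp (x j + e j) / ∑ i, Real.exp (x i + e i))
          - (fun j => Real.exp (x j) / ∑ i, Real.exp (x i))‖
        / (ε * ‖fun j => Real.exp (x j) / ∑ i, Real.exp (x i)‖)
        ≤ n * ‖x‖ := by
  change (∀ e, ‖softmax (x + e) - softmax x‖ / ‖softmax x‖ ≤ n * ‖e‖) ∧
    ∀ ε, 0 < ε → ∀ e, ‖e‖ ≤ ε * ‖x‖ →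
      ‖softmax (x + e) - softmax x‖ / (ε * ‖softmax x‖) ≤ n * ‖x‖
  have : Nonempty (Fin n) := ⟨⟨0, hn⟩⟩
  have hlip : ∀ e, ‖softmax (x + e) - softmax x‖ ≤ ‖e‖ := fun e =>
    (norm_softmax_add_sub_le x e).trans (half_le_self (norm_nonneg e))
  have hcard : 1 ≤ n * ‖softmax x‖ := by
    simpa using one_le_card_mul_norm_of_sum_eq_one (sum_softmax x)
  have hpos : 0 < ‖softmax x‖ := pos_of_mul_pos_right (one_pos.trans_le hcard) n.cast_nonneg
  refine ⟨fun e => ?_, fun ε hε e he => ?_⟩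
  · rw [div_le_iff₀ hpos]
    calc _ ≤ ‖e‖ := hlip e
      _ ≤ n * ‖e‖ * ‖softmax x‖ := by nlinarith [norm_nonneg e]
  · rw [div_le_iff₀ (by positivity)]
    calc _ ≤ ε * ‖x‖ := (hlip e).trans he
      _ ≤ n * ‖x‖ * (ε * ‖softmax x‖) := by
          nlinarith [mul_le_mul_of_nonneg_left hcard (mul_nonneg hε.le (norm_nonneg x))]
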